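/- arXiv:1410.4109 — 2 statements merged into one kernel-verified Lean document; each statement's English description precedes it below -/
import Mathlib

section
/- Let n ≥ 2 and let z be the word of length n defined by z_{2k-1} = k and z_{2k} = n+1−k (that is, z = 1 n 2 (n−1) 3 (n−2) ⋯). Then z is a flattened permutation, occ(z) ≥ occ(w) for every flattened permutation w of length n, and occ(z) = n(n−2)/4 if n is even and occ(z) = (n−1)²/4 if n is odd. -/
open Finset Polynomial

/-- The cycle of `π` starting at `m`: `m, π m, π² m, …` through one full period. -/
noncomputable def cycleList {n : ℕ} (π : Equiv.Perm (Fin n)) (m : Fin n) : List (Fin n) :=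
  (List.range (Function.minimalPeriod π m)).map (fun k => (π ^ k) m)

/-- The minima of the cycles of `π`, listed in increasing order. -/
def cycleMins {n : ℕ} (π : Equiv.Perm (Fin n)) : List (Fin n) :=
  (Finset.univ.filter (fun m : Fin n => ∀ k < n, m ≤ (π ^ k) m)).sort (· ≤ ·)

/-- The flattened permutation of `π`, as a word on the letters `1, …, n`:
erase the parentheses from the standard cycle form of `π`. -/
noncomputable def flattenPerm {n : ℕ} (π : Equiv.Perm (Fin n)) : List ℕ :=
  ((cycleMins π).map (cycleList π)).flatten.map (fun m => (m : ℕ) + 1)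

/-- The number of occurrences of the pattern 13-2 in the word `w = w₁w₂⋯wₙ`
(1-based), i.e. the number of pairs `(i,j)` with `2 ≤ i < j ≤ n` and
`w_{i-1} < w_j < w_i`.  Below, `p.1` and `p.2` are the 0-based versions of `i` and `j`. -/
def occ (w : List ℕ) : ℕ :=
  ((Finset.range w.length ×ˢ Finset.range w.length).filter
    (fun p : ℕ × ℕ => 1 ≤ p.1 ∧ p.1 < p.2 ∧
      w.getD (p.1 - 1) 0 < w.getD p.2 0 ∧ w.getD p.2 0 < w.getD p.1 0)).card

/-- `g_n = Σ_{π ∈ S_n} q^{occ(Flatten(π))} ∈ ℤ[q]`. -/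
noncomputable def gPoly (n : ℕ) : Polynomial ℤ :=
  ∑ π : Equiv.Perm (Fin n), X ^ occ (flattenPerm π)

/-- `g_n(a₁⋯a_k)`: the sum of `q^{occ(Flatten(π))}` over the permutations `π` of length `n`
whose flattened permutation starts with the subword `a₁⋯a_k`. -/
noncomputable def gPrefix (n : ℕ) (w : List ℕ) : Polynomial ℤ :=
  ∑ π ∈ Finset.univ.filter (fun π : Equiv.Perm (Fin n) => w <+: flattenPerm π),
    X ^ occ (flattenPerm π)

/-- `g_{n,r}(a₁⋯a_k)`: the number of permutations `π` of length `n` such that `Flatten(π)`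
starts with `a₁⋯a_k` and has exactly `r` occurrences of the pattern 13-2. -/
noncomputable def gCount (n r : ℕ) (w : List ℕ) : ℕ :=
  (Finset.univ.filter (fun π : Equiv.Perm (Fin n) =>
    w <+: flattenPerm π ∧ occ (flattenPerm π) = r)).card

/-- The word `z = 1 n 2 (n−1) 3 (n−2) ⋯` of length `n`
(`z_{2k-1} = k`, `z_{2k} = n+1−k`, 1-based). -/
def zigzag (n : ℕ) : List ℕ :=
  (List.range n).map (fun p => if p % 2 = 0 then p / 2 + 1 else n - p / 2)

/-!
Fix the right end `j` of an occurrence `(i, j)` of 13-2. The admissible `i` contain no two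
neighbours, since `w_i > w_j` forbids `i + 1`, so at most `⌊j/2⌋` occurrences end at the
(0-based) position `j`, and every word of length at most `n` has at most
`∑_{j<n} ⌊j/2⌋ = ⌊(n-1)²/4⌋` occurrences. The zigzag attains this bound at every `j`, since every
odd position before `j` works, and it is the flattening of the involution `k ↦ n + 1 - k`,
whose cycles are `(k, n + 1 - k)`.
-/

section Cycles

open Function

variable {n : ℕ} (π : Equiv.Perm (Fin n))

theorem coe_cycleList (m : Fin n) : (cycleList π m : Cycle (Fin n)) = periodicOrbit π m := by
  simp [cycleList, periodicOrbit, Equiv.Perm.iterate_eq_pow]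

theorem nodup_cycleList (m : Fin n) : (cycleList π m).Nodup := by
  rw [← Cycle.nodup_coe_iff, coe_cycleList]
  exact nodup_periodicOrbit

theorem mem_cycleList_iff_sameCycle {m x : Fin n} : x ∈ cycleList π m ↔ π.SameCycle m x := by
  rw [← Cycle.mem_coe_iff, coe_cycleList, mem_periodicOrbit_iff (π.injective.mem_periodicPts m)]
  simp only [Equiv.Perm.iterate_eq_pow]
  exact ⟨fun ⟨k, hk⟩ => ⟨k, by simpa using hk⟩, Equiv.Perm.SameCycle.exists_nat_pow_eq⟩

theorem mem_cycleMins {m : Fin n} : m ∈ cycleMins π ↔ ∀ x, π.SameCycle m x → m ≤ x := by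
  simp only [cycleMins, Finset.mem_sort, Finset.mem_filter, Finset.mem_univ, true_and]
  refine ⟨fun h x hx => ?_, fun h k _ => h _ ⟨k, by simp⟩⟩
  -- every point of the cycle is `π ^ k m` with `k` below the minimal period, hence below `n`
  obtain ⟨k, hk, rfl⟩ := List.mem_map.1 ((mem_cycleList_iff_sameCycle π).2 hx)
  have hperiod : minimalPeriod π m ≤ n := by simpa using minimalPeriod_le_card (f := π) (x := m)
  exact h k ((List.mem_range.1 hk).trans_le hperiod)

theorem nodup_flatten_cycleList : ((cycleMins π).map (cycleList π)).flatten.Nodup := by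
  refine List.nodup_flatten.2 ⟨by simpa using fun m _ => nodup_cycleList π m, ?_⟩
  refine List.pairwise_map.2 ((Finset.sort_nodup _ _).imp_of_mem fun hm hm' hne => ?_)
  intro x hx hx'
  have hsame : π.SameCycle _ _ := ((mem_cycleList_iff_sameCycle π).1 hx).trans
    ((mem_cycleList_iff_sameCycle π).1 hx').symm
  exact hne (le_antisymm ((mem_cycleMins π).1 hm _ hsame) ((mem_cycleMins π).1 hm' _ hsame.symm))

-- The coercion `List (Fin n) → List ℕ` in `flattenPerm` elaborates as a monadic bind.
theorem flattenPerm_eq_map :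
    flattenPerm π = ((cycleMins π).map (cycleList π)).flatten.map (fun m => m.val + 1) := by
  simp only [flattenPerm, List.bind_eq_flatMap]
  rw [← Function.comp_def pure Fin.val, List.flatMap_pure_eq_map, List.map_map]
  rfl

theorem length_flattenPerm_le : (flattenPerm π).length ≤ n := by
  rw [flattenPerm_eq_map, List.length_map]
  simpa using (nodup_flatten_cycleList π).length_le_card

variable {π}

theorem cycleList_of_involutive (hπ : Involutive π) (m : Fin n) :
    cycleList π m = if π m = m then [m] else [m, π m] := by
  split_ifs with hfix
  · simp [cycleList, minimalPeriod_eq_one_iff_isFixedPt.2 hfix]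
  · have hper : IsPeriodicPt π 2 m := hπ m
    simp [cycleList, minimalPeriod_eq_prime hper hfix, List.range_succ]

theorem sameCycle_iff_of_involutive (hπ : Involutive π) {m x : Fin n} :
    π.SameCycle m x ↔ x = m ∨ x = π m := by
  rw [← mem_cycleList_iff_sameCycle, cycleList_of_involutive hπ]
  split_ifs with hfix <;> simp [hfix]

theorem mem_cycleMins_of_involutive (hπ : Involutive π) {m : Fin n} :
    m ∈ cycleMins π ↔ m ≤ π m := by
  simp [mem_cycleMins, sameCycle_iff_of_involutive hπ]

end Cycles

theorem mem_cycleMins_revPerm {n : ℕ} {m : Fin n} :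
    m ∈ cycleMins (Fin.revPerm : Equiv.Perm (Fin n)) ↔ 2 * m.val < n := by
  rw [mem_cycleMins_of_involutive Fin.rev_involutive, Fin.revPerm_apply, Fin.le_def, Fin.val_rev]
  omega

theorem cycleMins_revPerm_map_val (n : ℕ) :
    (cycleMins (Fin.revPerm : Equiv.Perm (Fin n))).map Fin.val = List.range ((n + 1) / 2) := by
  change List.map Fin.valEmbedding _ = _
  rw [cycleMins, StrictMonoOn.map_finsetSort _ _ (Fin.val_strictMono.strictMonoOn _),
    ← Finset.sort_range]
  congr 1
  ext a
  simp only [Finset.mem_map, Fin.valEmbedding_apply, Finset.mem_range]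
  have hmem := fun m : Fin n => (Finset.mem_sort _).symm.trans (mem_cycleMins_revPerm (m := m))
  constructor
  · rintro ⟨m, hm, rfl⟩
    have := (hmem m).1 hm
    omega
  · exact fun ha => ⟨⟨a, by omega⟩, (hmem _).2 (by simp only; omega), rfl⟩

theorem flatten_map_pair_eq_map_range {α : Type*} (g : ℕ → α) (m : ℕ) :
    ((List.range m).map fun k => [g (2 * k), g (2 * k + 1)]).flatten =
      (List.range (2 * m)).map g := by
  induction m with
  | zero => simp
  | succ m ih =>
    rw [Nat.mul_succ, List.range_succ, List.range_succ, List.range_succ]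
    simp [ih]

theorem zigzag_eq_flatten (n : ℕ) :
    zigzag n = ((List.range ((n + 1) / 2)).map
      fun k => if 2 * k + 1 = n then [k + 1] else [k + 1, n - k]).flatten := by
  set g : ℕ → ℕ := fun p => if p % 2 = 0 then p / 2 + 1 else n - p / 2
  have hpair : ∀ k, 2 * k + 1 < n →
      (if 2 * k + 1 = n then [k + 1] else [k + 1, n - k]) = [g (2 * k), g (2 * k + 1)] := by
    intro k hk
    simp only [g, if_neg hk.ne]
    congr <;> split_ifs <;> omega
  have hpairs : ∀ h, 2 * h ≤ n → ((List.range h).map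
      fun k => if 2 * k + 1 = n then [k + 1] else [k + 1, n - k]) =
      (List.range h).map fun k => [g (2 * k), g (2 * k + 1)] :=
    fun h hh => List.map_congr_left fun k hk => hpair k (by have := List.mem_range.1 hk; omega)
  obtain ⟨h, rfl | rfl⟩ := Nat.even_or_odd' n
  · rw [show (2 * h + 1) / 2 = h by omega, hpairs h le_rfl, flatten_map_pair_eq_map_range]
    rfl
  · rw [show (2 * h + 1 + 1) / 2 = h + 1 by omega, List.range_succ, List.map_append,
      List.flatten_append, hpairs h (by omega), flatten_map_pair_eq_map_range]
    simp [zigzag, List.range_succ, g]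

theorem flattenPerm_revPerm (n : ℕ) :
    flattenPerm (Fin.revPerm : Equiv.Perm (Fin n)) = zigzag n := by
  rw [flattenPerm_eq_map, List.map_flatten, zigzag_eq_flatten, ← cycleMins_revPerm_map_val,
    List.map_map, List.map_map]
  congr 1
  refine List.map_congr_left fun m _ => ?_
  have hm := m.isLt
  rw [Function.comp_apply, Function.comp_apply, cycleList_of_involutive Fin.rev_involutive,
    Fin.revPerm_apply]
  by_cases hfix : 2 * m.val + 1 = n
  · rw [if_pos (Fin.ext (by rw [Fin.val_rev]; omega)), if_pos hfix]
    rfl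
  · rw [if_neg (fun h => hfix (by rw [Fin.ext_iff, Fin.val_rev] at h; omega)), if_neg hfix,
      List.map_cons, List.map_cons, List.map_nil, Fin.val_rev,
      show n - (m.val + 1) + 1 = n - m.val by omega]

theorem card_le_of_subset_Ico_of_add_one_notMem {s : Finset ℕ} {a b : ℕ}
    (hs : s ⊆ Finset.Ico a b) (h : ∀ i ∈ s, i + 1 ∉ s) : s.card ≤ (b - a + 1) / 2 := by
  -- `i ↦ (i - a) / 2` is injective on `s`: two elements with the same image would be neighbours
  rw [← Finset.card_range ((b - a + 1) / 2)]
  refine Finset.card_le_card_of_injOn (fun i => (i - a) / 2) (fun i hi => ?_)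
    fun i hi j hj hij => ?_
  · have := Finset.mem_Ico.1 (hs hi)
    simp only [Finset.coe_range, Set.mem_Iio]
    omega
  · have := Finset.mem_Ico.1 (hs hi)
    have := Finset.mem_Ico.1 (hs hj)
    simp only at hij
    rcases lt_trichotomy i j with hlt | heq | hgt
    · exact absurd (show j = i + 1 by omega ▸ hj) (h i hi)
    · exact heq
    · exact absurd (show i = j + 1 by omega ▸ hi) (h j hj)

def occAt (w : List ℕ) (j : ℕ) : Finset ℕ :=
  (Finset.range w.length).filter fun i =>
    1 ≤ i ∧ i < j ∧ w.getD (i - 1) 0 < w.getD j 0 ∧ w.getD j 0 < w.getD i 0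

theorem occ_eq_sum_card_occAt (w : List ℕ) :
    occ w = ∑ j ∈ Finset.range w.length, (occAt w j).card := by
  rw [occ, Finset.card_filter, Finset.sum_product_right]
  simp only [occAt, Finset.card_filter]

theorem occAt_subset_Ico (w : List ℕ) (j : ℕ) : occAt w j ⊆ Finset.Ico 1 j := fun i hi => by
  simp only [occAt, Finset.mem_filter] at hi
  exact Finset.mem_Ico.2 ⟨hi.2.1, hi.2.2.1⟩

theorem add_one_notMem_occAt {w : List ℕ} {i j : ℕ} (hi : i ∈ occAt w j) : i + 1 ∉ occAt w j := by
  intro hi'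
  simp only [occAt, Finset.mem_filter, add_tsub_cancel_right] at hi hi'
  omega

theorem occ_le_sum_div_two (w : List ℕ) : occ w ≤ ∑ j ∈ Finset.range w.length, j / 2 := by
  rw [occ_eq_sum_card_occAt]
  refine Finset.sum_le_sum fun j _ => ?_
  have := card_le_of_subset_Ico_of_add_one_notMem (occAt_subset_Ico w j)
    fun _ => add_one_notMem_occAt
  omega

@[simp]
theorem length_zigzag (n : ℕ) : (zigzag n).length = n := by
  simp [zigzag]

theorem getD_zigzag {n p : ℕ} (hp : p < n) :
    (zigzag n).getD p 0 = if p % 2 = 0 then p / 2 + 1 else n - p / 2 := by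
  simp [zigzag, hp]

-- `zigzag n` has `a + 1` at `2a` and `n - a` at `2a + 1`, and every later letter lies in between.
theorem image_odd_subset_occAt_zigzag {n j : ℕ} (hj : j < n) :
    (Finset.range (j / 2)).image (fun a => 2 * a + 1) ⊆ occAt (zigzag n) j := by
  intro i hi
  obtain ⟨a, ha, rfl⟩ := Finset.mem_image.1 hi
  simp only [Finset.mem_range] at ha
  simp only [occAt, Finset.mem_filter, Finset.mem_range, length_zigzag]
  rw [add_tsub_cancel_right, getD_zigzag (p := 2 * a) (by omega),
    getD_zigzag (p := 2 * a + 1) (by omega), getD_zigzag hj]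
  split_ifs <;> omega

theorem occ_zigzag (n : ℕ) : occ (zigzag n) = ∑ j ∈ Finset.range n, j / 2 := by
  refine le_antisymm (by simpa using occ_le_sum_div_two (zigzag n)) ?_
  rw [occ_eq_sum_card_occAt, length_zigzag]
  refine Finset.sum_le_sum fun j hj => ?_
  calc j / 2 = ((Finset.range (j / 2)).image fun a => 2 * a + 1).card := by
        rw [Finset.card_image_of_injective _ fun a b h => by simpa using h, Finset.card_range]
    _ ≤ (occAt (zigzag n) j).card :=
        Finset.card_le_card (image_odd_subset_occAt_zigzag (Finset.mem_range.1 hj))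

theorem sum_range_div_two (n : ℕ) : ∑ j ∈ Finset.range n, j / 2 = (n - 1) ^ 2 / 4 := by
  induction n using Nat.twoStepInduction with
  | zero => simp
  | one => simp
  | more n ih _ =>
    rw [Finset.sum_range_succ, Finset.sum_range_succ, ih]
    rcases n with _ | k
    · rfl
    · have hsq : (k + 1 + 2 - 1) ^ 2 = (k + 1 - 1) ^ 2 + 4 * (k + 1) := by
        rw [show k + 1 + 2 - 1 = k + 2 by omega, Nat.add_sub_cancel]
        ring
      rw [hsq]
      omega

theorem sub_one_sq_div_four_of_even {n : ℕ} (hn : n % 2 = 0) :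
    (n - 1) ^ 2 / 4 = n * (n - 2) / 4 := by
  obtain ⟨k, rfl⟩ : ∃ k, n = 2 * k := ⟨n / 2, by omega⟩
  rcases k with _ | k
  · rfl
  · rw [show 2 * (k + 1) - 1 = 2 * k + 1 by omega, show 2 * (k + 1) - 2 = 2 * k by omega,
      show (2 * k + 1) ^ 2 = 4 * (k * k + k) + 1 by ring,
      show 2 * (k + 1) * (2 * k) = 4 * (k * k + k) by ring]
    omega

theorem zigzag_maximizes_occ_general (n : ℕ) :
    (∃ π : Equiv.Perm (Fin n), flattenPerm π = zigzag n)
    ∧ (∀ π : Equiv.Perm (Fin n), occ (flattenPerm π) ≤ occ (zigzag n))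
    ∧ occ (zigzag n) = (if n % 2 = 0 then n * (n - 2) / 4 else (n - 1) ^ 2 / 4) := by
  refine ⟨⟨Fin.revPerm, flattenPerm_revPerm n⟩, fun π => ?_, ?_⟩
  · calc occ (flattenPerm π) ≤ ∑ j ∈ Finset.range (flattenPerm π).length, j / 2 :=
          occ_le_sum_div_two _
      _ ≤ ∑ j ∈ Finset.range n, j / 2 :=
          Finset.sum_le_sum_of_subset (Finset.range_subset_range.2 (length_flattenPerm_le π))
      _ = occ (zigzag n) := (occ_zigzag n).symm
  · rw [occ_zigzag, sum_range_div_two]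
    split_ifs with hn
    exacts [sub_one_sq_div_four_of_even hn, rfl]

/-- For `n ≥ 2`, the word `z = 1 n 2 (n−1) 3 (n−2) ⋯` is a flattened
permutation, it maximizes `occ` among flattened permutations of length `n`, and
`occ(z) = n(n−2)/4` for even `n` and `(n−1)²/4` for odd `n`. -/
theorem zigzag_maximizes_occ (n : ℕ) (hn : 2 ≤ n) :
    (∃ π : Equiv.Perm (Fin n), flattenPerm π = zigzag n)
    ∧ (∀ π : Equiv.Perm (Fin n), occ (flattenPerm π) ≤ occ (zigzag n))
    ∧ occ (zigzag n) = (if n % 2 = 0 then n * (n - 2) / 4 else (n - 1) ^ 2 / 4) :=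
  zigzag_maximizes_occ_general n
end

section
/- For every integer n ≥ 2, every coefficient of the polynomial g_n ∈ ℤ[q] is an even integer. -/
open Finset Polynomial

/-!
Flatten(π) forgets whether its last letter is a cycle of its own. If the last cycle of `π` is a
single letter `(M)`, append `M` to the cycle before it (there is one once `n ≥ 2`); otherwise cut
the last letter off the last cycle and make it a new cycle. Each cycle still starts with its
minimum and the minima still increase, so Flatten(π) is unchanged; the two moves are mutually
inverse and exchange the two cases, so the permutations with a given number of occurrences of
13-2 come in pairs. Both moves multiply `π` on the left by a transposition.
-/

open Equiv Equiv.Perm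
open Function (minimalPeriod)

theorem Finset.sort_erase_append_of_forall_le {α : Type*} [LinearOrder α] {s : Finset α}
    {a : α} (ha : a ∈ s) (h : ∀ b ∈ s, b ≤ a) :
    (s.erase a).sort (· ≤ ·) ++ [a] = s.sort (· ≤ ·) := by
  have hsorted : ((s.erase a).sort (· ≤ ·) ++ [a]).Pairwise (· ≤ ·) := by
    refine List.pairwise_append.2 ⟨(s.erase a).pairwise_sort _, List.pairwise_singleton _ _, ?_⟩
    intro b hb _ hc
    rw [List.mem_singleton.1 hc]
    exact h b (Finset.mem_of_mem_erase ((Finset.mem_sort _).1 hb))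
  have hnodup : ((s.erase a).sort (· ≤ ·) ++ [a]).Nodup := by
    simpa [List.nodup_append, Finset.sort_nodup] using fun _ hb _ => hb
  have hset : ((s.erase a).sort (· ≤ ·) ++ [a]).toFinset = s := by
    ext b
    by_cases hb : b = a <;> simp [hb, ha]
  conv_rhs => rw [← hset]
  exact ((List.toFinset_sort _ hnodup).2 hsorted).symm

namespace Equiv.Perm

variable {α : Type*}

theorem isPeriodicPt_iff_pow_apply_eq {π : Perm α} {k : ℕ} {x : α} :
    Function.IsPeriodicPt π k x ↔ (π ^ k) x = x := by
  rw [Function.IsPeriodicPt, Function.IsFixedPt, coe_pow]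

theorem pow_minimalPeriod_apply (π : Perm α) (x : α) : (π ^ minimalPeriod π x) x = x :=
  isPeriodicPt_iff_pow_apply_eq.1 (Function.isPeriodicPt_minimalPeriod π x)

theorem minimalPeriod_pos [Finite α] (π : Perm α) (x : α) : 0 < minimalPeriod π x :=
  Function.minimalPeriod_pos_of_mem_periodicPts (π.injective.mem_periodicPts x)

end Equiv.Perm

variable {n : ℕ}

def cycleMinSet (π : Perm (Fin n)) : Finset (Fin n) :=
  Finset.univ.filter fun m : Fin n => ∀ k < n, m ≤ (π ^ k) m

theorem cycleMins_eq_sort (π : Perm (Fin n)) :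
    cycleMins π = (cycleMinSet π).sort (· ≤ ·) :=
  rfl

theorem mem_cycleList_iff {π : Perm (Fin n)} {m y : Fin n} :
    y ∈ cycleList π m ↔ π.SameCycle m y := by
  simp only [cycleList, List.mem_map, List.mem_range]
  constructor
  · rintro ⟨k, -, rfl⟩
    exact sameCycle_pow_right.2 (SameCycle.refl _ _)
  · intro h
    obtain ⟨k, rfl⟩ := h.exists_nat_pow_eq
    refine ⟨k % minimalPeriod π m, Nat.mod_lt _ (minimalPeriod_pos π m), ?_⟩
    simp only [coe_pow, Function.iterate_mod_minimalPeriod_eq]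

theorem mem_cycleMinSet_iff {π : Perm (Fin n)} {m : Fin n} :
    m ∈ cycleMinSet π ↔ ∀ y, π.SameCycle m y → m ≤ y := by
  simp only [cycleMinSet, Finset.mem_filter, Finset.mem_univ, true_and]
  refine ⟨fun h y hy => ?_, fun h k _ => h _ (sameCycle_pow_right.2 (SameCycle.refl _ _))⟩
  obtain ⟨k, hk, rfl⟩ := List.mem_map.1 (mem_cycleList_iff.2 hy)
  refine h k ?_
  calc k < minimalPeriod π m := List.mem_range.1 hk
    _ ≤ Fintype.card (Fin n) := Function.minimalPeriod_le_card
    _ = n := Fintype.card_fin n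

theorem mem_cycleMinSet_of_apply_eq {π : Perm (Fin n)} {x : Fin n} (h : π x = x) :
    x ∈ cycleMinSet π :=
  mem_cycleMinSet_iff.2 fun _ hy => (hy.eq_of_left h).le

theorem mem_cycleMinSet_iff_eq_of_sameCycle {π : Perm (Fin n)} {c m : Fin n}
    (hc : c ∈ cycleMinSet π) (h : π.SameCycle c m) : m ∈ cycleMinSet π ↔ m = c :=
  ⟨fun hm => le_antisymm (mem_cycleMinSet_iff.1 hm c h.symm) (mem_cycleMinSet_iff.1 hc m h),
    fun hmc => hmc ▸ hc⟩

theorem exists_mem_cycleMinSet_sameCycle (π : Perm (Fin n)) (y : Fin n) :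
    ∃ m ∈ cycleMinSet π, π.SameCycle m y := by
  classical
  set cyc := Finset.univ.filter (π.SameCycle y)
  have hy : y ∈ cyc := Finset.mem_filter.2 ⟨Finset.mem_univ _, SameCycle.refl _ _⟩
  have hmin : cyc.min' ⟨y, hy⟩ ∈ cyc := cyc.min'_mem _
  simp only [cyc, Finset.mem_filter, Finset.mem_univ, true_and] at hmin
  refine ⟨_, mem_cycleMinSet_iff.2 fun z hz => cyc.min'_le z ?_, hmin.symm⟩
  simpa [cyc] using hmin.trans hz

theorem cycleList_congr {σ τ : Perm (Fin n)} {m : Fin n}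
    (h : ∀ y, σ.SameCycle m y → τ y = σ y) : cycleList τ m = cycleList σ m := by
  have hpow : ∀ k, (τ ^ k) m = (σ ^ k) m := by
    intro k
    induction k with
    | zero => rfl
    | succ k ih =>
      rw [pow_succ', mul_apply, ih, h _ (sameCycle_pow_right.2 (SameCycle.refl _ _)),
        ← mul_apply, ← pow_succ']
  have hperiod : minimalPeriod τ m = minimalPeriod σ m :=
    Function.minimalPeriod_eq_minimalPeriod_iff.2 fun k => by
      simp only [isPeriodicPt_iff_pow_apply_eq, hpow]
  simp only [cycleList, hperiod, hpow]

theorem cycleList_of_apply_eq {π : Perm (Fin n)} {x : Fin n} (h : π x = x) :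
    cycleList π x = [x] := by
  simp [cycleList, Function.minimalPeriod_eq_one_iff_isFixedPt.2 h]

section SwapMul

variable {σ : Perm (Fin n)} {c M m : Fin n}

theorem swap_mul_apply_of_not_sameCycle {y : Fin n} (hc : ¬σ.SameCycle c y)
    (hM : ¬σ.SameCycle M y) : (swap c M * σ) y = σ y := by
  refine swap_apply_of_ne_of_ne (fun h => hc ?_) (fun h => hM ?_) <;>
    exact sameCycle_apply_right.1 (h ▸ SameCycle.refl _ _)

theorem cycleList_swap_mul_of_not_sameCycle (hc : ¬σ.SameCycle c m) (hM : ¬σ.SameCycle M m) :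
    cycleList (swap c M * σ) m = cycleList σ m :=
  cycleList_congr fun _ hy =>
    swap_mul_apply_of_not_sameCycle (fun h => hc (h.trans hy.symm))
      fun h => hM (h.trans hy.symm)

theorem sameCycle_swap_mul_iff_of_not_sameCycle (hc : ¬σ.SameCycle c m)
    (hM : ¬σ.SameCycle M m) {y : Fin n} : (swap c M * σ).SameCycle m y ↔ σ.SameCycle m y := by
  rw [← mem_cycleList_iff, ← mem_cycleList_iff, cycleList_swap_mul_of_not_sameCycle hc hM]

theorem mem_cycleMinSet_swap_mul_iff_of_not_sameCycle (hc : ¬σ.SameCycle c m)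
    (hM : ¬σ.SameCycle M m) : m ∈ cycleMinSet (swap c M * σ) ↔ m ∈ cycleMinSet σ := by
  simp only [mem_cycleMinSet_iff, sameCycle_swap_mul_iff_of_not_sameCycle hc hM]

theorem swap_mul_pow_apply_of_lt_minimalPeriod (hM : σ M = M) (hcM : c ≠ M) {k : ℕ}
    (hk : k < minimalPeriod σ c) : ((swap c M * σ) ^ k) c = (σ ^ k) c := by
  induction k with
  | zero => rfl
  | succ k ih =>
    rw [pow_succ', mul_apply, ih (by omega), mul_apply, ← mul_apply σ, ← pow_succ']
    refine swap_apply_of_ne_of_ne (fun h => ?_) (fun h => hcM ?_)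
    · exact Function.not_isPeriodicPt_of_pos_of_lt_minimalPeriod k.succ_ne_zero hk
        (isPeriodicPt_iff_pow_apply_eq.2 h)
    · exact (σ ^ (k + 1)).injective (h.trans (pow_apply_eq_self_of_apply_eq_self hM _).symm)

theorem swap_mul_pow_minimalPeriod_apply (hM : σ M = M) (hcM : c ≠ M) :
    ((swap c M * σ) ^ minimalPeriod σ c) c = M := by
  obtain ⟨k, hk⟩ : ∃ k, minimalPeriod σ c = k + 1 := ⟨_, (Nat.succ_pred_eq_of_pos
    (minimalPeriod_pos σ c)).symm⟩
  rw [hk, pow_succ', mul_apply, swap_mul_pow_apply_of_lt_minimalPeriod hM hcM (by omega),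
    mul_apply, ← mul_apply σ, ← pow_succ', ← hk, pow_minimalPeriod_apply, swap_apply_left]

theorem minimalPeriod_swap_mul_of_apply_eq (hM : σ M = M) (hcM : c ≠ M) :
    minimalPeriod (swap c M * σ) c = minimalPeriod σ c + 1 := by
  have hper : ((swap c M * σ) ^ (minimalPeriod σ c + 1)) c = c := by
    rw [pow_succ', mul_apply, swap_mul_pow_minimalPeriod_apply hM hcM, mul_apply, hM,
      swap_apply_right]
  refine le_antisymm ((isPeriodicPt_iff_pow_apply_eq.2 hper).minimalPeriod_le (Nat.succ_pos _))
    (Nat.succ_le_of_lt ?_)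
  by_contra! hle
  have hτ := pow_minimalPeriod_apply (swap c M * σ) c
  rcases hle.lt_or_eq with hlt | heq
  · rw [swap_mul_pow_apply_of_lt_minimalPeriod hM hcM hlt] at hτ
    exact Function.not_isPeriodicPt_of_pos_of_lt_minimalPeriod (minimalPeriod_pos _ c).ne' hlt
      (isPeriodicPt_iff_pow_apply_eq.2 hτ)
  · exact hcM (by rw [← hτ, heq, swap_mul_pow_minimalPeriod_apply hM hcM])

theorem cycleList_swap_mul_of_apply_eq (hM : σ M = M) (hcM : c ≠ M) :
    cycleList (swap c M * σ) c = cycleList σ c ++ [M] := by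
  rw [cycleList, minimalPeriod_swap_mul_of_apply_eq hM hcM, List.range_succ, List.map_append,
    cycleList, List.map_singleton, swap_mul_pow_minimalPeriod_apply hM hcM]
  congr 1
  exact List.map_congr_left fun k hk =>
    swap_mul_pow_apply_of_lt_minimalPeriod hM hcM (List.mem_range.1 hk)

theorem sameCycle_swap_mul_iff_of_apply_eq (hM : σ M = M) (hcM : c ≠ M) {y : Fin n} :
    (swap c M * σ).SameCycle c y ↔ σ.SameCycle c y ∨ y = M := by
  rw [← mem_cycleList_iff, cycleList_swap_mul_of_apply_eq hM hcM, List.mem_append,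
    mem_cycleList_iff, List.mem_singleton]

theorem cycleMinSet_swap_mul (hM : σ M = M) (hc : c ∈ cycleMinSet σ) (hcM : c < M) :
    cycleMinSet (swap c M * σ) = (cycleMinSet σ).erase M := by
  have hc' : c ∈ cycleMinSet (swap c M * σ) := by
    refine mem_cycleMinSet_iff.2 fun y hy => ?_
    rcases (sameCycle_swap_mul_iff_of_apply_eq hM hcM.ne).1 hy with hy | rfl
    · exact mem_cycleMinSet_iff.1 hc y hy
    · exact hcM.le
  ext m
  rw [Finset.mem_erase]
  by_cases hcm : (swap c M * σ).SameCycle c m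
  · rw [mem_cycleMinSet_iff_eq_of_sameCycle hc' hcm]
    rcases (sameCycle_swap_mul_iff_of_apply_eq hM hcM.ne).1 hcm with hcm | rfl
    · rw [mem_cycleMinSet_iff_eq_of_sameCycle hc hcm]
      exact ⟨fun h => ⟨h ▸ hcM.ne, h⟩, And.right⟩
    · simp [hcM.ne']
  · have hσ : ¬σ.SameCycle c m := fun h =>
      hcm ((sameCycle_swap_mul_iff_of_apply_eq hM hcM.ne).2 (Or.inl h))
    have hmM : m ≠ M := fun h =>
      hcm ((sameCycle_swap_mul_iff_of_apply_eq hM hcM.ne).2 (Or.inr h))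
    rw [mem_cycleMinSet_swap_mul_iff_of_not_sameCycle hσ fun h => hmM (h.eq_of_left hM).symm]
    exact ⟨fun h => ⟨hmM, h⟩, And.right⟩

theorem flattenPerm_swap_mul (hM : σ M = M) (hc : c ∈ (cycleMinSet σ).erase M)
    (hMmax : ∀ m ∈ cycleMinSet σ, m ≤ M)
    (hcmax : ∀ m ∈ (cycleMinSet σ).erase M, m ≤ c) :
    flattenPerm (swap c M * σ) = flattenPerm σ := by
  obtain ⟨hcM, hcσ⟩ := Finset.mem_erase.1 hc
  have hlt : c < M := lt_of_le_of_ne (hMmax c hcσ) hcM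
  set rest := ((cycleMinSet σ).erase M).erase c
  have hmins : cycleMins σ = rest.sort (· ≤ ·) ++ [c] ++ [M] := by
    rw [Finset.sort_erase_append_of_forall_le hc hcmax,
      Finset.sort_erase_append_of_forall_le (mem_cycleMinSet_of_apply_eq hM) hMmax,
      cycleMins_eq_sort]
  have hmins' : cycleMins (swap c M * σ) = rest.sort (· ≤ ·) ++ [c] := by
    rw [Finset.sort_erase_append_of_forall_le hc hcmax, cycleMins_eq_sort,
      cycleMinSet_swap_mul hM hcσ hlt]
  have hrest : (rest.sort (· ≤ ·)).map (cycleList (swap c M * σ)) =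
      (rest.sort (· ≤ ·)).map (cycleList σ) := by
    refine List.map_congr_left fun m hm => ?_
    simp only [rest, Finset.mem_sort, Finset.mem_erase] at hm
    obtain ⟨hmc, hmM, hmσ⟩ := hm
    exact cycleList_swap_mul_of_not_sameCycle
      (fun h => hmc ((mem_cycleMinSet_iff_eq_of_sameCycle hcσ h).1 hmσ))
      fun h => hmM (h.eq_of_left hM).symm
  simp only [flattenPerm, hmins, hmins', List.map_append, List.flatten_append, hrest,
    List.map_singleton, List.flatten_singleton, cycleList_swap_mul_of_apply_eq hM hcM,
    cycleList_of_apply_eq hM, List.append_assoc]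

end SwapMul

section TopCycleMin

variable [NeZero n] {π σ : Perm (Fin n)} {a : Fin n}

theorem zero_mem_cycleMinSet (π : Perm (Fin n)) : 0 ∈ cycleMinSet π :=
  mem_cycleMinSet_iff.2 fun y _ => Fin.zero_le y

noncomputable def topMin (π : Perm (Fin n)) : Fin n :=
  (cycleMinSet π).sup id

noncomputable def secondMin (π : Perm (Fin n)) : Fin n :=
  ((cycleMinSet π).erase (topMin π)).sup id

theorem topMin_mem (π : Perm (Fin n)) : topMin π ∈ cycleMinSet π := by
  have := Finset.sup_mem_of_nonempty (f := id) ⟨0, zero_mem_cycleMinSet π⟩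
  rwa [Set.image_id, Finset.mem_coe] at this

theorem le_topMin {m : Fin n} (hm : m ∈ cycleMinSet π) : m ≤ topMin π :=
  Finset.le_sup (f := id) hm

theorem topMin_eq_of_forall_le (ha : a ∈ cycleMinSet π) (h : ∀ m ∈ cycleMinSet π, m ≤ a) :
    topMin π = a :=
  le_antisymm (Finset.sup_le h) (le_topMin ha)

theorem secondMin_mem (h : ((cycleMinSet π).erase (topMin π)).Nonempty) :
    secondMin π ∈ (cycleMinSet π).erase (topMin π) := by
  have := Finset.sup_mem_of_nonempty (f := id) h
  rwa [Set.image_id, Finset.mem_coe] at this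

theorem le_secondMin {m : Fin n} (hm : m ∈ (cycleMinSet π).erase (topMin π)) :
    m ≤ secondMin π :=
  Finset.le_sup (f := id) hm

theorem secondMin_eq_of_forall_le (ha : a ∈ (cycleMinSet π).erase (topMin π))
    (h : ∀ m ∈ (cycleMinSet π).erase (topMin π), m ≤ a) : secondMin π = a :=
  le_antisymm (Finset.sup_le h) (le_secondMin ha)

theorem cycleMinSet_erase_topMin_nonempty [Nontrivial (Fin n)]
    (h : π (topMin π) = topMin π) : ((cycleMinSet π).erase (topMin π)).Nonempty := by
  obtain ⟨y, hy⟩ := exists_ne (topMin π)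
  obtain ⟨m, hm, hmy⟩ := exists_mem_cycleMinSet_sameCycle π y
  refine ⟨m, Finset.mem_erase.2 ⟨fun hmt => hy ?_, hm⟩⟩
  subst hmt
  exact (hmy.eq_of_left h).symm

/-- When the last cycle of `σ` is a fixed point `(M)`, this appends `M` to the cycle before it. -/
noncomputable def mergePerm (σ : Perm (Fin n)) : Perm (Fin n) :=
  swap (secondMin σ) (topMin σ) * σ

/-- Cuts the last letter off the last cycle of `π` and makes it a cycle of its own. -/
noncomputable def splitPerm (π : Perm (Fin n)) : Perm (Fin n) :=
  swap (topMin π) (π⁻¹ (topMin π)) * π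

theorem mergePerm_apply_topMin (hσ : σ (topMin σ) = topMin σ) :
    mergePerm σ (topMin σ) = secondMin σ := by
  rw [mergePerm, mul_apply, hσ, swap_apply_right]

section Merge

variable [Nontrivial (Fin n)]

theorem flattenPerm_mergePerm (hσ : σ (topMin σ) = topMin σ) :
    flattenPerm (mergePerm σ) = flattenPerm σ :=
  flattenPerm_swap_mul hσ (secondMin_mem (cycleMinSet_erase_topMin_nonempty hσ))
    (fun _ => le_topMin) fun _ => le_secondMin

theorem topMin_mergePerm (hσ : σ (topMin σ) = topMin σ) :
    topMin (mergePerm σ) = secondMin σ := by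
  have hsecond := secondMin_mem (cycleMinSet_erase_topMin_nonempty hσ)
  obtain ⟨hne, hmem⟩ := Finset.mem_erase.1 hsecond
  have hmins : cycleMinSet (mergePerm σ) = (cycleMinSet σ).erase (topMin σ) :=
    cycleMinSet_swap_mul hσ hmem (lt_of_le_of_ne (le_topMin hmem) hne)
  exact topMin_eq_of_forall_le (hmins ▸ hsecond) fun _ hm => le_secondMin (hmins ▸ hm)

theorem mergePerm_apply_topMin_mergePerm_ne (hσ : σ (topMin σ) = topMin σ) :
    mergePerm σ (topMin (mergePerm σ)) ≠ topMin (mergePerm σ) := by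
  rw [topMin_mergePerm hσ]
  intro hfix
  have hsame : (mergePerm σ).SameCycle (topMin σ) (mergePerm σ (topMin σ)) :=
    sameCycle_apply_right.2 (SameCycle.refl _ _)
  rw [mergePerm_apply_topMin hσ] at hsame
  exact (Finset.mem_erase.1 (secondMin_mem (cycleMinSet_erase_topMin_nonempty hσ))).1
    (hsame.symm.eq_of_left hfix)

theorem splitPerm_mergePerm (hσ : σ (topMin σ) = topMin σ) : splitPerm (mergePerm σ) = σ := by
  rw [splitPerm, topMin_mergePerm hσ, Perm.inv_eq_iff_eq.2 (mergePerm_apply_topMin hσ).symm,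
    mergePerm, swap_mul_self_mul]

end Merge

theorem splitPerm_apply_inv_topMin (π : Perm (Fin n)) :
    splitPerm π (π⁻¹ (topMin π)) = π⁻¹ (topMin π) := by
  rw [splitPerm, mul_apply, show π (π⁻¹ (topMin π)) = topMin π from π.apply_symm_apply _,
    swap_apply_left]

theorem swap_mul_splitPerm (π : Perm (Fin n)) :
    swap (topMin π) (π⁻¹ (topMin π)) * splitPerm π = π :=
  swap_mul_self_mul _ _ _

theorem topMin_lt_inv_apply_topMin (hπ : π (topMin π) ≠ topMin π) :
    topMin π < π⁻¹ (topMin π) :=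
  lt_of_le_of_ne (mem_cycleMinSet_iff.1 (topMin_mem π) _ ⟨-1, zpow_neg_one π ▸ rfl⟩)
    fun h => hπ (Perm.eq_inv_iff_eq.1 h)

theorem topMin_mem_cycleMinSet_splitPerm (hπ : π (topMin π) ≠ topMin π) :
    topMin π ∈ cycleMinSet (splitPerm π) := by
  have hlist : cycleList π (topMin π) =
      cycleList (splitPerm π) (topMin π) ++ [π⁻¹ (topMin π)] := by
    have := cycleList_swap_mul_of_apply_eq (splitPerm_apply_inv_topMin π)
      (topMin_lt_inv_apply_topMin hπ).ne
    rwa [swap_mul_splitPerm] at this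
  refine mem_cycleMinSet_iff.2 fun y hy => mem_cycleMinSet_iff.1 (topMin_mem π) y ?_
  rw [← mem_cycleList_iff, hlist]
  exact List.mem_append_left _ (mem_cycleList_iff.2 hy)

theorem cycleMinSet_eq_erase_splitPerm (hπ : π (topMin π) ≠ topMin π) :
    cycleMinSet π = (cycleMinSet (splitPerm π)).erase (π⁻¹ (topMin π)) := by
  conv_lhs => rw [← swap_mul_splitPerm π]
  exact cycleMinSet_swap_mul (splitPerm_apply_inv_topMin π) (topMin_mem_cycleMinSet_splitPerm hπ)
    (topMin_lt_inv_apply_topMin hπ)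

theorem topMin_splitPerm (hπ : π (topMin π) ≠ topMin π) :
    topMin (splitPerm π) = π⁻¹ (topMin π) := by
  refine topMin_eq_of_forall_le (mem_cycleMinSet_of_apply_eq (splitPerm_apply_inv_topMin π))
    fun m hm => ?_
  by_cases hmx : m = π⁻¹ (topMin π)
  · exact hmx.le
  · have hmπ : m ∈ cycleMinSet π := by
      rw [cycleMinSet_eq_erase_splitPerm hπ]
      exact Finset.mem_erase.2 ⟨hmx, hm⟩
    exact (le_topMin hmπ).trans (topMin_lt_inv_apply_topMin hπ).le

theorem splitPerm_apply_topMin_splitPerm (hπ : π (topMin π) ≠ topMin π) :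
    splitPerm π (topMin (splitPerm π)) = topMin (splitPerm π) := by
  rw [topMin_splitPerm hπ]
  exact splitPerm_apply_inv_topMin π

theorem cycleMinSet_eq_erase_topMin_splitPerm (hπ : π (topMin π) ≠ topMin π) :
    cycleMinSet π = (cycleMinSet (splitPerm π)).erase (topMin (splitPerm π)) := by
  rw [topMin_splitPerm hπ]
  exact cycleMinSet_eq_erase_splitPerm hπ

theorem secondMin_splitPerm (hπ : π (topMin π) ≠ topMin π) :
    secondMin (splitPerm π) = topMin π := by
  have hmins := cycleMinSet_eq_erase_topMin_splitPerm hπ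
  exact secondMin_eq_of_forall_le (hmins ▸ topMin_mem π) fun _ hm => le_topMin (hmins ▸ hm)

theorem mergePerm_splitPerm (hπ : π (topMin π) ≠ topMin π) :
    mergePerm (splitPerm π) = π := by
  rw [mergePerm, secondMin_splitPerm hπ, topMin_splitPerm hπ, swap_mul_splitPerm]

theorem flattenPerm_splitPerm (hπ : π (topMin π) ≠ topMin π) :
    flattenPerm (splitPerm π) = flattenPerm π := by
  have hmins := cycleMinSet_eq_erase_topMin_splitPerm hπ
  conv_rhs => rw [← swap_mul_splitPerm π, ← topMin_splitPerm hπ]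
  exact (flattenPerm_swap_mul (splitPerm_apply_topMin_splitPerm hπ) (hmins ▸ topMin_mem π)
    (fun _ => le_topMin) fun _ hm => le_topMin (hmins ▸ hm)).symm

end TopCycleMin

theorem card_filter_apply_topMin_eq_card_filter_apply_topMin_ne [NeZero n] [Nontrivial (Fin n)]
    (P : List ℕ → Prop) [DecidablePred P] :
    #{σ : Perm (Fin n) | P (flattenPerm σ) ∧ σ (topMin σ) = topMin σ} =
      #{π : Perm (Fin n) | P (flattenPerm π) ∧ π (topMin π) ≠ topMin π} := by
  refine Finset.card_bij' (fun σ _ => mergePerm σ) (fun π _ => splitPerm π) ?_ ?_ ?_ ?_ <;>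
    simp only [Finset.mem_filter, Finset.mem_univ, true_and]
  · rintro σ ⟨hP, hσ⟩
    exact ⟨flattenPerm_mergePerm hσ ▸ hP, mergePerm_apply_topMin_mergePerm_ne hσ⟩
  · rintro π ⟨hP, hπ⟩
    exact ⟨(flattenPerm_splitPerm hπ).symm ▸ hP, splitPerm_apply_topMin_splitPerm hπ⟩
  · rintro σ ⟨-, hσ⟩
    exact splitPerm_mergePerm hσ
  · rintro π ⟨-, hπ⟩
    exact mergePerm_splitPerm hπ

theorem even_card_filter_flattenPerm (hn : 2 ≤ n) (P : List ℕ → Prop) [DecidablePred P] :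
    Even #{π : Perm (Fin n) | P (flattenPerm π)} := by
  have : NeZero n := ⟨by omega⟩
  have : Nontrivial (Fin n) := Fin.nontrivial_iff_two_le.2 hn
  rw [← Finset.card_filter_add_card_filter_not (p := fun π => π (topMin π) = topMin π),
    Finset.filter_filter, Finset.filter_filter,
    card_filter_apply_topMin_eq_card_filter_apply_topMin_ne]
  exact ⟨_, rfl⟩

theorem coeff_gPoly (n m : ℕ) :
    (gPoly n).coeff m = #{π : Perm (Fin n) | occ (flattenPerm π) = m} := by
  simp only [gPoly, Polynomial.finsetSum_coeff, Polynomial.coeff_X_pow, Finset.sum_boole,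
    eq_comm (a := m)]

/-- For every `n ≥ 2`, every coefficient of `g_n ∈ ℤ[q]` is even. -/
theorem gPoly_coeff_even (n : ℕ) (hn : 2 ≤ n) (m : ℕ) :
    Even ((gPoly n).coeff m) := by
  rw [coeff_gPoly]
  exact (even_card_filter_flattenPerm hn fun w => occ w = m).natCast
end
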